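/- arXiv:2212.12373 — 2 statements merged into one kernel-verified Lean document; each statement's English description precedes it below -/
import Mathlib

section
/- Let 0 < α ≤ 1 and let μ be an α-dimensional measure on ℝ. Then for any j ≥ 0 and nonnegative G, H ∈ L^2(dμ), ∬ G(x) H(x') χ_{[2^{−j}, 2^{−j+1}]}(x − x') dμ(x) dμ(x') ≤ C 2^{−αj} ‖G‖_{L^2(dμ)} ‖H‖_{L^2(dμ)} with C depending only on the α-dimensional constant of μ. -/
/-!
Schur's test: if a kernel `K ≥ 0` has all row integrals `≤ A` and all column integrals `≤ B`,
then writing `f x g y K = (f x K^{1/2}) (g y K^{1/2})` and applying Cauchy–Schwarz on the product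
space bounds `∬ f(x) g(y) K(x, y)` by `√(AB) ‖f‖₂ ‖g‖₂`. For the kernel `1[a ≤ x - y ≤ 2a]`
with `a = 2^{-j}`, each row and each column integral is the `μ`-measure of an interval of
length `a`, which lies in a ball of radius `a` and so has measure at most `Cμ a^α`.
-/

open MeasureTheory Set Function
open scoped ENNReal

section SchurTest

variable {X Y : Type*} [MeasurableSpace X] [MeasurableSpace Y] {μ : Measure X} {ν : Measure Y}
  {K : X → Y → ℝ≥0∞}

theorem lintegral_lintegral_mul_kernel_le (hK : ∀ x, Measurable (K x)) {A : ℝ≥0∞}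
    (hA : ∀ x, ∫⁻ y, K x y ∂ν ≤ A) {h : X → ℝ≥0∞} (hh : AEMeasurable h μ) :
    ∫⁻ x, ∫⁻ y, h x * K x y ∂ν ∂μ ≤ A * ∫⁻ x, h x ∂μ :=
  calc ∫⁻ x, ∫⁻ y, h x * K x y ∂ν ∂μ = ∫⁻ x, h x * ∫⁻ y, K x y ∂ν ∂μ := by
        simp_rw [lintegral_const_mul _ (hK _)]
    _ ≤ ∫⁻ x, h x * A ∂μ := by gcongr with x; exact hA x
    _ = A * ∫⁻ x, h x ∂μ := by rw [lintegral_mul_const'' _ hh, mul_comm]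

theorem eLpNorm_two_eq_lintegral_rpow_two (f : X → ℝ≥0∞) :
    eLpNorm f 2 μ = (∫⁻ x, f x ^ (2 : ℝ) ∂μ) ^ (1 / 2 : ℝ) := by
  simp [eLpNorm_eq_lintegral_rpow_enorm_toReal two_ne_zero ENNReal.ofNat_ne_top]

theorem lintegral_lintegral_mul_kernel_le_eLpNorm_mul_eLpNorm [SFinite μ] [SFinite ν]
    (hK : Measurable (uncurry K)) {A B : ℝ≥0∞} (hA : ∀ x, ∫⁻ y, K x y ∂ν ≤ A)
    (hB : ∀ y, ∫⁻ x, K x y ∂μ ≤ B) {f : X → ℝ≥0∞} {g : Y → ℝ≥0∞} (hf : AEMeasurable f μ)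
    (hg : AEMeasurable g ν) :
    ∫⁻ x, ∫⁻ y, f x * g y * K x y ∂ν ∂μ ≤
      (A * B) ^ (1 / 2 : ℝ) * eLpNorm f 2 μ * eLpNorm g 2 ν := by
  set k : X × Y → ℝ≥0∞ := fun p ↦ K p.1 p.2 ^ (2⁻¹ : ℝ)
  have hk : Measurable k := hK.pow_const _
  have hk_sq (p : X × Y) : k p ^ (2 : ℝ) = K p.1 p.2 := by
    simpa [k] using ENNReal.rpow_inv_natCast_pow two_ne_zero (K p.1 p.2)
  set F : X × Y → ℝ≥0∞ := fun p ↦ f p.1 * k p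
  set G : X × Y → ℝ≥0∞ := fun p ↦ g p.2 * k p
  have hF : AEMeasurable F (μ.prod ν) := hf.comp_fst.mul hk.aemeasurable
  have hG : AEMeasurable G (μ.prod ν) := hg.comp_snd.mul hk.aemeasurable
  have hFG (x : X) (y : Y) : f x * g y * K x y = F (x, y) * G (x, y) := by
    rw [← hk_sq (x, y), ENNReal.rpow_two]; ring
  have hF_sq : ∫⁻ p, F p ^ (2 : ℝ) ∂μ.prod ν ≤ A * ∫⁻ x, f x ^ (2 : ℝ) ∂μ := by
    simp_rw [F, ENNReal.mul_rpow_of_nonneg _ _ zero_le_two, hk_sq]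
    rw [lintegral_prod (fun p ↦ f p.1 ^ (2 : ℝ) * K p.1 p.2)
      ((hf.pow_const _).comp_fst.mul hK.aemeasurable)]
    exact lintegral_lintegral_mul_kernel_le (fun x ↦ hK.of_uncurry_left) hA (hf.pow_const _)
  have hG_sq : ∫⁻ p, G p ^ (2 : ℝ) ∂μ.prod ν ≤ B * ∫⁻ y, g y ^ (2 : ℝ) ∂ν := by
    simp_rw [G, ENNReal.mul_rpow_of_nonneg _ _ zero_le_two, hk_sq]
    rw [lintegral_prod_symm (fun p ↦ g p.2 ^ (2 : ℝ) * K p.1 p.2)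
      ((hg.pow_const _).comp_snd.mul hK.aemeasurable)]
    exact lintegral_lintegral_mul_kernel_le (fun y ↦ hK.of_uncurry_right) hB (hg.pow_const _)
  calc ∫⁻ x, ∫⁻ y, f x * g y * K x y ∂ν ∂μ = ∫⁻ p, (F * G) p ∂μ.prod ν := by
        simp_rw [hFG]; exact (lintegral_prod _ (hF.mul hG)).symm
    _ ≤ (∫⁻ p, F p ^ (2 : ℝ) ∂μ.prod ν) ^ (1 / 2 : ℝ) *
          (∫⁻ p, G p ^ (2 : ℝ) ∂μ.prod ν) ^ (1 / 2 : ℝ) :=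
        ENNReal.lintegral_mul_le_Lp_mul_Lq _ .two_two hF hG
    _ ≤ (A * ∫⁻ x, f x ^ (2 : ℝ) ∂μ) ^ (1 / 2 : ℝ) *
          (B * ∫⁻ y, g y ^ (2 : ℝ) ∂ν) ^ (1 / 2 : ℝ) := by
        gcongr
    _ = (A * B) ^ (1 / 2 : ℝ) * eLpNorm f 2 μ * eLpNorm g 2 ν := by
        simp only [eLpNorm_two_eq_lintegral_rpow_two,
          ENNReal.mul_rpow_of_nonneg _ _ (by norm_num : (0 : ℝ) ≤ 1 / 2)]
        ring

end SchurTest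

section UpperRegularMeasure

variable {C : ℝ≥0∞} {α : ℝ}

theorem isLocallyFiniteMeasure_of_measure_ball_le {X : Type*} [PseudoMetricSpace X]
    [MeasurableSpace X] {μ : Measure X} (hC : C ≠ ⊤)
    (hμ : ∀ (x : X) (r : ℝ), 0 < r → μ (Metric.ball x r) ≤ C * ENNReal.ofReal (r ^ α)) :
    IsLocallyFiniteMeasure μ where
  finiteAtNhds x := ⟨Metric.ball x 1, Metric.ball_mem_nhds x one_pos,
    (hμ x 1 one_pos).trans_lt (ENNReal.mul_lt_top hC.lt_top ENNReal.ofReal_lt_top)⟩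

variable {μ : Measure ℝ}

theorem measure_Icc_le_of_measure_ball_le
    (hμ : ∀ (x : ℝ) (r : ℝ), 0 < r → μ (Metric.ball x r) ≤ C * ENNReal.ofReal (r ^ α))
    {c d : ℝ} (hcd : c < d) :
    μ (Icc c d) ≤ C * ENNReal.ofReal ((d - c) ^ α) := by
  have hball : Icc c d ⊆ Metric.ball ((c + d) / 2) (d - c) := by
    intro x hx
    rw [Real.ball_eq_Ioo]
    constructor <;> linarith [hx.1, hx.2]
  exact (measure_mono hball).trans (hμ _ _ (sub_pos.2 hcd))

theorem lintegral_indicator_Icc_sub_left_le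
    (hμ : ∀ (x : ℝ) (r : ℝ), 0 < r → μ (Metric.ball x r) ≤ C * ENNReal.ofReal (r ^ α))
    {a b : ℝ} (hab : a < b) (x : ℝ) :
    ∫⁻ y, (Icc a b).indicator 1 (x - y) ∂μ ≤ C * ENNReal.ofReal ((b - a) ^ α) :=
  calc ∫⁻ y, (Icc a b).indicator 1 (x - y) ∂μ = μ (Icc (x - b) (x - a)) := by
        rw [← lintegral_indicator_one measurableSet_Icc, ← preimage_const_sub_Icc]; rfl
    _ ≤ C * ENNReal.ofReal ((b - a) ^ α) := by
        simpa only [sub_sub_sub_cancel_left] using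
          measure_Icc_le_of_measure_ball_le hμ (sub_lt_sub_left hab x)

theorem lintegral_indicator_Icc_sub_right_le
    (hμ : ∀ (x : ℝ) (r : ℝ), 0 < r → μ (Metric.ball x r) ≤ C * ENNReal.ofReal (r ^ α))
    {a b : ℝ} (hab : a < b) (y : ℝ) :
    ∫⁻ x, (Icc a b).indicator 1 (x - y) ∂μ ≤ C * ENNReal.ofReal ((b - a) ^ α) :=
  calc ∫⁻ x, (Icc a b).indicator 1 (x - y) ∂μ = μ (Icc (a + y) (b + y)) := by
        rw [← lintegral_indicator_one measurableSet_Icc, ← preimage_sub_const_Icc]; rfl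
    _ ≤ C * ENNReal.ofReal ((b - a) ^ α) := by
        simpa only [add_sub_add_right_eq_sub] using
          measure_Icc_le_of_measure_ball_le hμ (add_lt_add_left hab y)

end UpperRegularMeasure

theorem young_dyadic_fractal_general (α : ℝ)
    (μ : Measure ℝ) (Cμ : ℝ≥0∞) (hCμ : Cμ ≠ ⊤)
    (hμ : ∀ (x : ℝ) (r : ℝ), 0 < r → μ (Metric.ball x r) ≤ Cμ * ENNReal.ofReal (r ^ α)) :
    ∃ C : ℝ≥0∞, C ≠ ⊤ ∧ ∀ (j : ℕ) (G H : ℝ → ℝ),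
      (∀ x, 0 ≤ G x) → (∀ x, 0 ≤ H x) →
      MemLp G 2 μ → MemLp H 2 μ →
      ∫⁻ x, ∫⁻ x',
          ENNReal.ofReal (G x * H x') *
            Set.indicator (Set.Icc ((2:ℝ) ^ (-(j:ℝ))) ((2:ℝ) ^ (-(j:ℝ) + 1)))
              (fun _ => (1:ℝ≥0∞)) (x - x') ∂μ ∂μ ≤
        C * ENNReal.ofReal ((2:ℝ) ^ (-α * j)) * eLpNorm G 2 μ * eLpNorm H 2 μ := by
  have := isLocallyFiniteMeasure_of_measure_ball_le hCμ hμ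
  refine ⟨Cμ, hCμ, fun j G H hG₀ hH₀ hG hH ↦ ?_⟩
  set a : ℝ := 2 ^ (-(j : ℝ))
  set b : ℝ := 2 ^ (-(j : ℝ) + 1)
  have hab : a < b := Real.rpow_lt_rpow_of_exponent_lt one_lt_two (lt_add_one _)
  have hba : b - a = a := by simp only [a, b, Real.rpow_add_one two_ne_zero]; ring
  have hpow : a ^ α = 2 ^ (-α * j) := by rw [← Real.rpow_mul zero_le_two]; ring_nf
  have hK : Measurable (uncurry fun x y : ℝ ↦ (Icc a b).indicator (1 : ℝ → ℝ≥0∞) (x - y)) :=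
    (measurable_const.indicator measurableSet_Icc).comp (measurable_fst.sub measurable_snd)
  have hprod (x y : ℝ) : ENNReal.ofReal (G x * H y) = ‖G x‖ₑ * ‖H y‖ₑ := by
    rw [ENNReal.ofReal_mul (hG₀ x), Real.enorm_eq_ofReal (hG₀ x), Real.enorm_eq_ofReal (hH₀ y)]
  have key := lintegral_lintegral_mul_kernel_le_eLpNorm_mul_eLpNorm hK
    (lintegral_indicator_Icc_sub_left_le hμ hab) (lintegral_indicator_Icc_sub_right_le hμ hab)
    hG.aestronglyMeasurable.enorm hH.aestronglyMeasurable.enorm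
  rw [eLpNorm_enorm, eLpNorm_enorm, hba, hpow, ← sq, ← ENNReal.rpow_natCast,
    ← ENNReal.rpow_mul] at key
  simp_rw [hprod]
  exact key.trans_eq (by norm_num)

theorem young_dyadic_fractal (α : ℝ) (hα0 : 0 < α) (hα1 : α ≤ 1)
    (μ : Measure ℝ) (Cμ : ℝ≥0∞) (hCμ : Cμ ≠ ⊤)
    (hμ : ∀ (x : ℝ) (r : ℝ), 0 < r → μ (Metric.ball x r) ≤ Cμ * ENNReal.ofReal (r ^ α)) :
    ∃ C : ℝ≥0∞, C ≠ ⊤ ∧ ∀ (j : ℕ) (G H : ℝ → ℝ),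
      (∀ x, 0 ≤ G x) → (∀ x, 0 ≤ H x) →
      MemLp G 2 μ → MemLp H 2 μ →
      ∫⁻ x, ∫⁻ x',
          ENNReal.ofReal (G x * H x') *
            Set.indicator (Set.Icc ((2:ℝ) ^ (-(j:ℝ))) ((2:ℝ) ^ (-(j:ℝ) + 1)))
              (fun _ => (1:ℝ≥0∞)) (x - x') ∂μ ∂μ ≤
        C * ENNReal.ofReal ((2:ℝ) ^ (-α * j)) * eLpNorm G 2 μ * eLpNorm H 2 μ :=
  young_dyadic_fractal_general α μ Cμ hCμ hμ
end

section
/- (van der Corput, first derivative) Let a < b, let φ: [a,b] → ℝ be continuously differentiable with φ' monotonic on (a,b) and |φ'(ξ)| ≥ 1 for all ξ ∈ [a,b], and let ψ: [a,b] → ℂ be continuously differentiable. Then there exists an absolute constant C such that for all λ > 0, |∫_a^b e^{iλφ(ξ)} ψ(ξ) dξ| ≤ C λ^{−1} ( ‖ψ'‖_{L^1[a,b]} + ‖ψ‖_{L^∞[a,b]} ). -/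
/-!
Write `e^{iΦ} = (Φ')⁻¹ • (Φ' e^{iΦ})` with `Φ = λφ`. The second factor has the primitive
`-i e^{iΦ}`, bounded by `2`, and since `Φ'` is continuous and never vanishes, the weight `(Φ')⁻¹`
is monotone with `|(Φ')⁻¹| ≤ λ⁻¹`. A monotone weight bounded by `M` multiplies the bound on the
primitives by at most `3M`: after shifting it to an antitone weight `h` with values in `[0, 2M]`,
the layer-cake formula `h(ξ) = ∫₀^{2M} 𝟙{t < h(ξ)} dt` and Fubini express the weighted integral
through integrals over the initial segments `{h > t}` of the interval. This bounds every
`∫_a^x e^{iλφ}` by `6/λ`, and one integration by parts against `ψ` gives the theorem.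
-/

open MeasureTheory Set intervalIntegral

theorem IsLowerSet.exists_inter_Ioc_ae_eq_Ioc {s : Set ℝ} (hs : IsLowerSet s) {c d : ℝ}
    (hcd : c ≤ d) : ∃ u ∈ Icc c d, (s ∩ Ioc c d : Set ℝ) =ᵐ[volume] Ioc c u := by
  rcases (s ∩ Ioc c d).eq_empty_or_nonempty with hempty | ⟨x, hx⟩
  · exact ⟨c, left_mem_Icc.2 hcd, by simp [hempty]⟩
  have hbdd : BddAbove (s ∩ Ioc c d) := bddAbove_Ioc.mono inter_subset_right
  set u := sSup (s ∩ Ioc c d)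
  refine ⟨u, ⟨hx.2.1.le.trans (le_csSup hbdd hx), csSup_le ⟨x, hx⟩ fun y hy => hy.2.2⟩, ?_⟩
  have hsub : s ∩ Ioc c d ⊆ Ioc c u := fun y hy => ⟨hy.2.1, le_csSup hbdd hy⟩
  have hsup : Ioo c u ⊆ s ∩ Ioc c d := fun y hy => by
    obtain ⟨z, hz, hyz⟩ := exists_lt_of_lt_csSup ⟨x, hx⟩ hy.2
    exact ⟨hs hyz.le hz.1, hy.1, hyz.le.trans hz.2.2⟩
  exact hsub.eventuallyLE.antisymm (Ioo_ae_eq_Ioc.symm.le.trans hsup.eventuallyLE)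

section MonotoneWeight

variable {E : Type*} [NormedAddCommGroup E] [NormedSpace ℝ E] [CompleteSpace E]
  {c d M K : ℝ} {h : ℝ → ℝ} {f : ℝ → E}

theorem norm_integral_smul_le_of_antitone_of_nonneg (hcd : c ≤ d) (hh : Antitone h)
    (h0 : ∀ ξ, 0 ≤ h ξ) (hM : ∀ ξ, h ξ ≤ M)
    (hf : IntegrableOn f (Ioc c d)) (hK : ∀ u ∈ Icc c d, ‖∫ ξ in c..u, f ξ‖ ≤ K) :
    ‖∫ ξ in c..d, h ξ • f ξ‖ ≤ M * K := by
  set under : Set (ℝ × ℝ) := {p | p.2 < h p.1}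
  have hunder : MeasurableSet under :=
    measurableSet_lt measurable_snd (hh.measurable.comp measurable_fst)
  set g : ℝ × ℝ → E := under.indicator fun p => f p.1
  have hlayer : ∀ ξ, ∫ t in Ioc 0 M, g (ξ, t) = h ξ • f ξ := by
    intro ξ
    have hIio : Iio (h ξ) ∩ Ioc 0 M = Ioo 0 (h ξ) := by
      ext t
      simp only [mem_inter_iff, mem_Iio, mem_Ioc, mem_Ioo]
      exact ⟨fun ⟨h1, h2, _⟩ => ⟨h2, h1⟩, fun ⟨h1, h2⟩ => ⟨h2, h1, h2.le.trans (hM ξ)⟩⟩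
    change ∫ t in Ioc 0 M, (Iio (h ξ)).indicator (fun _ => f ξ) t = _
    rw [MeasureTheory.integral_indicator measurableSet_Iio,
      Measure.restrict_restrict measurableSet_Iio, hIio, setIntegral_const,
      Real.volume_real_Ioo_of_le (h0 ξ), sub_zero]
  have hg : Integrable g ((volume.restrict (Ioc c d)).prod (volume.restrict (Ioc 0 M))) :=
    (hf.comp_fst _).indicator hunder
  have hfubini : ∫ ξ in Ioc c d, h ξ • f ξ = ∫ t in Ioc 0 M, ∫ ξ in Ioc c d, g (ξ, t) := by
    simp_rw [← hlayer]
    exact integral_integral_swap hg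
  have hslice : ∀ t, ‖∫ ξ in Ioc c d, g (ξ, t)‖ ≤ K := by
    intro t
    have hlower : IsLowerSet {ξ | t < h ξ} := fun x y hyx hx => hx.trans_le (hh hyx)
    have hmeas : MeasurableSet {ξ | t < h ξ} := measurableSet_lt measurable_const hh.measurable
    obtain ⟨u, hu, hae⟩ := hlower.exists_inter_Ioc_ae_eq_Ioc hcd
    change ‖∫ ξ in Ioc c d, {ξ | t < h ξ}.indicator f ξ‖ ≤ K
    rw [MeasureTheory.integral_indicator hmeas, Measure.restrict_restrict hmeas,
      setIntegral_congr_set hae, ← integral_of_le hu.1]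
    exact hK u hu
  rw [integral_of_le hcd, hfubini]
  calc _ ≤ K * volume.real (Ioc 0 M) :=
        norm_setIntegral_le_of_norm_le_const measure_Ioc_lt_top fun t _ => hslice t
    _ = M * K := by rw [Real.volume_real_Ioc_of_le ((h0 c).trans (hM c)), sub_zero, mul_comm]

theorem norm_integral_smul_le_of_antitoneOn (hcd : c ≤ d) (hM0 : 0 ≤ M)
    (hh : AntitoneOn h (Ioo c d)) (hM : ∀ ξ ∈ Ioo c d, |h ξ| ≤ M)
    (hf : IntegrableOn f (Ioc c d)) (hK : ∀ u ∈ Icc c d, ‖∫ ξ in c..u, f ξ‖ ≤ K) :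
    ‖∫ ξ in c..d, h ξ • f ξ‖ ≤ 3 * M * K := by
  have hbdd : ∀ y ∈ h '' Ioo c d, -M ≤ y ∧ y ≤ M := by
    rintro _ ⟨ξ, hξ, rfl⟩
    exact abs_le.1 (hM ξ hξ)
  obtain ⟨g, hg, hgh⟩ :=
    hh.exists_antitone_extension ⟨-M, fun y hy => (hbdd y hy).1⟩ ⟨M, fun y hy => (hbdd y hy).2⟩
  set k : ℝ → ℝ := fun ξ => max (-M) (min M (g ξ)) + M
  have hk : Antitone k := fun x y hxy => by
    dsimp only [k]
    gcongr
    exact hg hxy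
  have hkh : ∀ ξ ∈ Ioo c d, h ξ = k ξ - M := fun ξ hξ => by
    obtain ⟨h1, h2⟩ := abs_le.1 (hM ξ hξ)
    simp only [k, ← hgh hξ, min_eq_right h2, max_eq_right h1, add_sub_cancel_right]
  have hk0 : ∀ ξ, 0 ≤ k ξ := fun ξ => by
    linarith [le_max_left (-M) (min M (g ξ))]
  have hk2M : ∀ ξ, k ξ ≤ 2 * M := fun ξ => by
    linarith [max_le (neg_le_self hM0) (min_le_left M (g ξ))]
  have hkf : IntervalIntegrable (fun ξ => k ξ • f ξ) volume c d := by
    refine (intervalIntegrable_iff_integrableOn_Ioc_of_le hcd).2 ?_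
    refine hf.bdd_smul (2 * M) hk.measurable.aestronglyMeasurable (ae_of_all _ fun ξ => ?_)
    rw [Real.norm_of_nonneg (hk0 ξ)]
    exact hk2M ξ
  have hMf : IntervalIntegrable (fun ξ => M • f ξ) volume c d :=
    ((intervalIntegrable_iff_integrableOn_Ioc_of_le hcd).2 hf).smul M
  have hsplit : ∫ ξ in c..d, h ξ • f ξ = (∫ ξ in c..d, k ξ • f ξ) - M • ∫ ξ in c..d, f ξ := by
    rw [← intervalIntegral.integral_smul, ← intervalIntegral.integral_sub hkf hMf]
    simp only [integral_of_le hcd, integral_Ioc_eq_integral_Ioo]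
    refine setIntegral_congr_fun measurableSet_Ioo fun ξ hξ => ?_
    rw [hkh ξ hξ, sub_smul]
  calc ‖∫ ξ in c..d, h ξ • f ξ‖
      ≤ ‖∫ ξ in c..d, k ξ • f ξ‖ + ‖M • ∫ ξ in c..d, f ξ‖ := by
        rw [hsplit]
        exact norm_sub_le _ _
    _ ≤ 2 * M * K + M * K := by
        rw [norm_smul, Real.norm_of_nonneg hM0]
        gcongr
        · exact norm_integral_smul_le_of_antitone_of_nonneg hcd hk hk0 hk2M hf hK
        · exact hK d ⟨hcd, le_rfl⟩
    _ = 3 * M * K := by ring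

theorem norm_integral_smul_le_of_monotoneOn_or_antitoneOn (hcd : c ≤ d) (hM0 : 0 ≤ M)
    (hh : MonotoneOn h (Ioo c d) ∨ AntitoneOn h (Ioo c d))
    (hM : ∀ ξ ∈ Ioo c d, |h ξ| ≤ M)
    (hf : IntegrableOn f (Ioc c d)) (hK : ∀ u ∈ Icc c d, ‖∫ ξ in c..u, f ξ‖ ≤ K) :
    ‖∫ ξ in c..d, h ξ • f ξ‖ ≤ 3 * M * K := by
  rcases hh with hh | hh
  · simpa only [Pi.neg_apply, neg_smul, intervalIntegral.integral_neg, norm_neg] using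
      norm_integral_smul_le_of_antitoneOn hcd hM0 hh.neg
        (fun ξ hξ => (abs_neg (h ξ)).trans_le (hM ξ hξ)) hf hK
  · exact norm_integral_smul_le_of_antitoneOn hcd hM0 hh hM hf hK

end MonotoneWeight

theorem IsPreconnected.forall_pos_or_forall_neg {α : Type*} [TopologicalSpace α] {s : Set α}
    (hs : IsPreconnected s) {f : α → ℝ} (hf : ContinuousOn f s) (h0 : ∀ x ∈ s, f x ≠ 0) :
    (∀ x ∈ s, 0 < f x) ∨ ∀ x ∈ s, f x < 0 := by
  by_contra! hcon
  obtain ⟨⟨x, hx, hfx⟩, ⟨y, hy, hfy⟩⟩ := hcon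
  obtain ⟨z, hz, hfz⟩ := hs.intermediate_value hx hy hf ⟨hfx, hfy⟩
  exact h0 z hz hfz

section Inverse

variable {α 𝕜 : Type*} [Preorder α] [Field 𝕜] [LinearOrder 𝕜] [IsStrictOrderedRing 𝕜]
  {f : α → 𝕜} {s : Set α}

theorem MonotoneOn.antitoneOn_inv (hf : MonotoneOn f s)
    (hsign : (∀ x ∈ s, 0 < f x) ∨ ∀ x ∈ s, f x < 0) : AntitoneOn (fun x => (f x)⁻¹) s := by
  intro x hx y hy hxy
  rcases hsign with hpos | hneg
  · exact inv_anti₀ (hpos x hx) (hf hx hy hxy)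
  · exact (inv_le_inv_of_neg (hneg y hy) (hneg x hx)).2 (hf hx hy hxy)

theorem AntitoneOn.monotoneOn_inv (hf : AntitoneOn f s)
    (hsign : (∀ x ∈ s, 0 < f x) ∨ ∀ x ∈ s, f x < 0) : MonotoneOn (fun x => (f x)⁻¹) s := by
  intro x hx y hy hxy
  rcases hsign with hpos | hneg
  · exact inv_anti₀ (hpos y hy) (hf hx hy hxy)
  · exact (inv_le_inv_of_neg (hneg x hx) (hneg y hy)).2 (hf hx hy hxy)

end Inverse

section Phase

open Complex

variable {Φ Φ' : ℝ → ℝ} {a b : ℝ}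

theorem norm_integral_deriv_mul_exp_I_mul_le_two (hab : a ≤ b) (hΦ : ContinuousOn Φ (Icc a b))
    (hΦ' : ∀ ξ ∈ Ioo a b, HasDerivAt Φ (Φ' ξ) ξ) (hΦ'c : ContinuousOn Φ' (Icc a b)) :
    ‖∫ ξ in a..b, Φ' ξ * exp (I * Φ ξ)‖ ≤ 2 := by
  have hderiv : ∀ ξ ∈ Ioo a b,
      HasDerivAt (fun ξ => exp (I * Φ ξ)) (exp (I * Φ ξ) * (I * Φ' ξ)) ξ := fun ξ hξ =>
    ((hΦ' ξ hξ).ofReal_comp.const_mul I).cexp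
  have hderiv_cont : ContinuousOn (fun ξ => exp (I * Φ ξ) * (I * Φ' ξ)) (Icc a b) := by fun_prop
  have hneg_I : ∀ ξ, (Φ' ξ : ℂ) * exp (I * Φ ξ) = -I * (exp (I * Φ ξ) * (I * Φ' ξ)) :=
    fun ξ => by
      ring_nf
      simp [I_sq]
  rw [integral_congr fun ξ _ => hneg_I ξ, intervalIntegral.integral_const_mul,
    integral_eq_sub_of_hasDerivAt_of_le hab (by fun_prop) hderiv
      (hderiv_cont.intervalIntegrable_of_Icc hab)]
  calc ‖-I * (exp (I * Φ b) - exp (I * Φ a))‖ ≤ ‖exp (I * Φ b)‖ + ‖exp (I * Φ a)‖ := by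
        rw [norm_mul, norm_neg, norm_I, one_mul]
        exact norm_sub_le _ _
    _ = 2 := by
        simp only [mul_comm I, norm_exp_ofReal_mul_I]
        norm_num

theorem norm_integral_exp_I_mul_le {μ : ℝ} (hμ : 0 < μ)
    (hΦ : ContinuousOn Φ (Icc a b)) (hΦ' : ∀ ξ ∈ Ioo a b, HasDerivAt Φ (Φ' ξ) ξ)
    (hΦ'c : ContinuousOn Φ' (Icc a b))
    (hmono : MonotoneOn Φ' (Ioo a b) ∨ AntitoneOn Φ' (Ioo a b))
    (hμΦ' : ∀ ξ ∈ Icc a b, μ ≤ |Φ' ξ|) {x : ℝ} (hx : x ∈ Icc a b) :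
    ‖∫ ξ in a..x, exp (I * Φ ξ)‖ ≤ 6 / μ := by
  have hsub : Icc a x ⊆ Icc a b := Icc_subset_Icc_right hx.2
  have hΦ'0 : ∀ ξ ∈ Icc a b, Φ' ξ ≠ 0 := fun ξ hξ h0 => by
    have := hμΦ' ξ hξ
    rw [h0, abs_zero] at this
    linarith
  have hsign := isPreconnected_Ioo.forall_pos_or_forall_neg (hΦ'c.mono Ioo_subset_Icc_self)
    fun ξ hξ => hΦ'0 ξ (Ioo_subset_Icc_self hξ)
  have hweight : MonotoneOn (fun ξ => (Φ' ξ)⁻¹) (Ioo a x) ∨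
      AntitoneOn (fun ξ => (Φ' ξ)⁻¹) (Ioo a x) :=
    (hmono.symm.imp (·.monotoneOn_inv hsign) (·.antitoneOn_inv hsign)).imp
      (·.mono (Ioo_subset_Ioo_right hx.2)) (·.mono (Ioo_subset_Ioo_right hx.2))
  have hweight_le : ∀ ξ ∈ Ioo a x, |(Φ' ξ)⁻¹| ≤ μ⁻¹ := fun ξ hξ => by
    rw [abs_inv]
    exact inv_anti₀ hμ (hμΦ' ξ (hsub (Ioo_subset_Icc_self hξ)))
  have hprim : ∀ u ∈ Icc a x, ‖∫ ξ in a..u, Φ' ξ * exp (I * Φ ξ)‖ ≤ 2 := fun u hu =>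
    have hau : Icc a u ⊆ Icc a b := (Icc_subset_Icc_right hu.2).trans hsub
    norm_integral_deriv_mul_exp_I_mul_le_two hu.1 (hΦ.mono hau)
      (fun ξ hξ => hΦ' ξ (Ioo_subset_Ioo_right (hu.2.trans hx.2) hξ)) (hΦ'c.mono hau)
  have hfactor : ∫ ξ in a..x, exp (I * Φ ξ) =
      ∫ ξ in a..x, (Φ' ξ)⁻¹ • ((Φ' ξ : ℂ) * exp (I * Φ ξ)) := by
    refine integral_congr fun ξ hξ => ?_
    rw [uIcc_of_le hx.1] at hξ
    rw [Complex.real_smul, ofReal_inv,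
      inv_mul_cancel_left₀ (ofReal_ne_zero.2 (hΦ'0 ξ (hsub hξ)))]
  have hintegrable : IntegrableOn (fun ξ => (Φ' ξ : ℂ) * exp (I * Φ ξ)) (Ioc a x) := by
    have hcont : ContinuousOn (fun ξ => (Φ' ξ : ℂ) * exp (I * Φ ξ)) (Icc a b) := by fun_prop
    exact (hcont.mono hsub).integrableOn_Icc.mono_set Ioc_subset_Icc_self
  calc ‖∫ ξ in a..x, exp (I * Φ ξ)‖
      = ‖∫ ξ in a..x, (Φ' ξ)⁻¹ • ((Φ' ξ : ℂ) * exp (I * Φ ξ))‖ := by rw [hfactor]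
    _ ≤ 3 * μ⁻¹ * 2 :=
      norm_integral_smul_le_of_monotoneOn_or_antitoneOn hx.1 (inv_nonneg.2 hμ.le) hweight
        hweight_le hintegrable hprim
    _ = 6 / μ := by ring

end Phase

theorem norm_integral_mul_le_of_norm_primitive_le {e ψ ψ' : ℝ → ℂ} {a b B S : ℝ} (hab : a ≤ b)
    (he : ContinuousOn e (Icc a b)) (hψ : ContinuousOn ψ (Icc a b))
    (hψ' : ∀ x ∈ Ioo a b, HasDerivAt ψ (ψ' x) x) (hψ'i : IntervalIntegrable ψ' volume a b)
    (hB : ∀ x ∈ Icc a b, ‖∫ ξ in a..x, e ξ‖ ≤ B) (hS : ∀ x ∈ Icc a b, ‖ψ x‖ ≤ S) :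
    ‖∫ ξ in a..b, e ξ * ψ ξ‖ ≤ B * ((∫ ξ in a..b, ‖ψ' ξ‖) + S) := by
  set F : ℝ → ℂ := fun x => ∫ ξ in a..x, e ξ
  have hF_cont : ContinuousOn F (Icc a b) := by
    have := continuousOn_primitive_interval (μ := volume) (uIcc_of_le hab ▸ he.integrableOn_Icc)
    rwa [uIcc_of_le hab] at this
  have hF_deriv : ∀ x ∈ Ioo a b, HasDerivAt F (e x) x := fun x hx =>
    integral_hasDerivAt_right
      ((he.mono (Icc_subset_Icc_right hx.2.le)).intervalIntegrable_of_Icc hx.1.le)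
      ((he.mono Ioo_subset_Icc_self).stronglyMeasurableAtFilter isOpen_Ioo x hx)
      (he.continuousAt (Icc_mem_nhds hx.1 hx.2))
  have hparts : ∫ ξ in a..b, e ξ * ψ ξ = F b * ψ b - ∫ ξ in a..b, F ξ * ψ' ξ := by
    have := integral_mul_deriv_eq_deriv_mul_of_hasDerivAt (u := ψ) (v := F)
      (uIcc_of_le hab ▸ hψ) (uIcc_of_le hab ▸ hF_cont)
      (by simpa only [min_eq_left hab, max_eq_right hab] using hψ')
      (by simpa only [min_eq_left hab, max_eq_right hab] using hF_deriv)
      hψ'i (uIcc_of_le hab ▸ he).intervalIntegrable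
    simp only [F, integral_same, mul_zero, sub_zero] at this
    simp only [F, mul_comm (e _), this, mul_comm (ψ' _), mul_comm (ψ b)]
  have hFψ' : ‖∫ ξ in a..b, F ξ * ψ' ξ‖ ≤ B * ∫ ξ in a..b, ‖ψ' ξ‖ := by
    rw [← intervalIntegral.integral_const_mul]
    refine norm_integral_le_of_norm_le hab (ae_of_all _ fun ξ hξ => ?_) (hψ'i.norm.const_mul B)
    rw [norm_mul]
    exact mul_le_mul_of_nonneg_right (hB ξ (Ioc_subset_Icc_self hξ)) (norm_nonneg _)
  have hB0 : 0 ≤ B := (norm_nonneg _).trans (hB b ⟨hab, le_rfl⟩)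
  calc ‖∫ ξ in a..b, e ξ * ψ ξ‖ ≤ ‖F b‖ * ‖ψ b‖ + ‖∫ ξ in a..b, F ξ * ψ' ξ‖ := by
        rw [hparts, ← norm_mul]
        exact norm_sub_le _ _
    _ ≤ B * S + B * ∫ ξ in a..b, ‖ψ' ξ‖ := by
        gcongr
        · exact hB b ⟨hab, le_rfl⟩
        · exact hS b ⟨hab, le_rfl⟩
    _ = B * ((∫ ξ in a..b, ‖ψ' ξ‖) + S) := by ring

theorem DifferentiableOn.hasDerivAt_derivWithin {F : Type*} [NormedAddCommGroup F]
    [NormedSpace ℝ F] {f : ℝ → F} {s : Set ℝ} {x : ℝ} (hf : DifferentiableOn ℝ f s)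
    (hs : s ∈ nhds x) : HasDerivAt f (derivWithin f s x) x := by
  rw [derivWithin_of_mem_nhds hs]
  exact (hf.differentiableAt hs).hasDerivAt

theorem van_der_corput_first :
    ∃ C : ℝ, 0 < C ∧ ∀ (a b : ℝ), a < b → ∀ (φ : ℝ → ℝ) (ψ : ℝ → ℂ),
      ContDiffOn ℝ 1 φ (Set.Icc a b) →
      (MonotoneOn (derivWithin φ (Set.Icc a b)) (Set.Ioo a b) ∨
        AntitoneOn (derivWithin φ (Set.Icc a b)) (Set.Ioo a b)) →
      (∀ ξ ∈ Set.Icc a b, 1 ≤ |derivWithin φ (Set.Icc a b) ξ|) →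
      ContDiffOn ℝ 1 ψ (Set.Icc a b) →
      ∀ lam : ℝ, 0 < lam →
        ‖∫ ξ in a..b, Complex.exp (Complex.I * ((lam * φ ξ : ℝ) : ℂ)) * ψ ξ‖ ≤
          C * lam⁻¹ *
            ((∫ ξ in a..b, ‖derivWithin ψ (Set.Icc a b) ξ‖) + ⨆ ξ : Set.Icc a b, ‖ψ ξ‖) := by
  refine ⟨6, by norm_num, fun a b hab φ ψ hφ hmono hφ1 hψ lam hlam => ?_⟩
  have hU : UniqueDiffOn ℝ (Icc a b) := uniqueDiffOn_Icc hab
  have hφc : ContinuousOn φ (Icc a b) := hφ.continuousOn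
  have hprim : ∀ x ∈ Icc a b,
      ‖∫ ξ in a..x, Complex.exp (Complex.I * ((lam * φ ξ : ℝ) : ℂ))‖ ≤ 6 / lam :=
    fun x hx => norm_integral_exp_I_mul_le hlam (continuousOn_const.mul hφc)
      (fun ξ hξ => ((hφ.differentiableOn one_ne_zero).hasDerivAt_derivWithin
        (Icc_mem_nhds hξ.1 hξ.2)).const_mul lam)
      (continuousOn_const.mul (hφ.continuousOn_derivWithin hU le_rfl))
      (hmono.imp (monotone_mul_left_of_nonneg hlam.le).comp_monotoneOn
        (monotone_mul_left_of_nonneg hlam.le).comp_antitoneOn)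
      (fun ξ hξ => by
        rw [abs_mul, abs_of_pos hlam]
        exact le_mul_of_one_le_right hlam.le (hφ1 ξ hξ)) hx
  have hbdd : BddAbove (range fun ξ : Icc a b => ‖ψ ξ‖) := by
    obtain ⟨K, hK⟩ := isCompact_Icc.exists_bound_of_continuousOn hψ.continuousOn
    exact ⟨K, by rintro _ ⟨ξ, rfl⟩; exact hK ξ ξ.2⟩
  rw [← div_eq_mul_inv]
  exact norm_integral_mul_le_of_norm_primitive_le hab.le (by fun_prop) hψ.continuousOn
    (fun ξ hξ => (hψ.differentiableOn one_ne_zero).hasDerivAt_derivWithin (Icc_mem_nhds hξ.1 hξ.2))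
    ((hψ.continuousOn_derivWithin hU le_rfl).intervalIntegrable_of_Icc hab.le) hprim
    (fun x hx => le_ciSup hbdd ⟨x, hx⟩)
end
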